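/- arXiv:2103.13667 — 5 statements merged into one kernel-verified Lean document; each statement's English description precedes it below -/
import Mathlib

section
/- For ℓ ∈ C(L) (L a finite subset of a join-semilattice) and any j, membership j ∈ ℓ↑C(L) is equivalent to: ℓ ≤ j and for all ι ∈ L, ι ≤ j implies ι ≤ ℓ. -/
namespace Finset

variable {α : Type*} [SemilatticeSup α] [OrderBot α] [DecidableEq α]

theorem mem_image_sup_powerset_of_mem {L : Finset α} {a : α} (ha : a ∈ L) :
    a ∈ L.powerset.image (fun T => T.sup id) :=
  mem_image.2 ⟨{a}, mem_powerset.2 (singleton_subset_iff.2 ha), sup_singleton⟩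

/-- A join of elements of `L` lying below `j` has all its joinands below `j`, hence below `ℓ`. -/
theorem forall_mem_image_sup_powerset_le_imp_le_iff (L : Finset α) (ℓ j : α) :
    (∀ ι ∈ L.powerset.image (fun T => T.sup id), ι ≤ j → ι ≤ ℓ) ↔
      ∀ ι ∈ L, ι ≤ j → ι ≤ ℓ := by
  refine ⟨fun h ι hι => h ι (mem_image_sup_powerset_of_mem hι), fun h ι hι hιj => ?_⟩
  obtain ⟨T, hT, rfl⟩ := mem_image.1 hι
  exact Finset.sup_le fun x hx =>
    h x (mem_powerset.1 hT hx) ((le_sup (f := id) hx).trans hιj)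

end Finset

theorem upset_membership_iff_general {Lat : Type*} [SemilatticeSup Lat] [OrderBot Lat]
    [DecidableEq Lat] (L : Finset Lat) (ℓ j : Lat) :
    (ℓ ≤ j ∧ ∀ ι ∈ L.powerset.image (fun T => T.sup id), ι ≤ j → ι ≤ ℓ) ↔
      (ℓ ≤ j ∧ ∀ ι ∈ L, ι ≤ j → ι ≤ ℓ) :=
  and_congr_right' (Finset.forall_mem_image_sup_powerset_le_imp_le_iff L ℓ j)

theorem upset_membership_iff {Lat : Type*} [SemilatticeSup Lat] [OrderBot Lat]
    [DecidableEq Lat] (L : Finset Lat) (ℓ j : Lat)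
    (hℓ : ℓ ∈ L.powerset.image (fun T => T.sup id)) :
    (ℓ ≤ j ∧ ∀ ι ∈ L.powerset.image (fun T => T.sup id), ι ≤ j → ι ≤ ℓ) ↔
      (ℓ ≤ j ∧ ∀ ι ∈ L, ι ≤ j → ι ≤ ℓ) :=
  upset_membership_iff_general L ℓ j
end

section
/- Let p : Set (I × L) → Set (O × L) with L a complete lattice, and let k_p(ℓ) = ⨅{ j | ∃ x, j ∈ Labels(p(x)) ∧ ℓ ≤ j }. Suppose k : L → L is a closure operator such that every label appearing in any output of p is a fixed point of k (i.e., for all x and j ∈ Labels(p(x)), k(j) = j). Then for all ℓ, j ∈ L: k_p(ℓ) ≠ k_p(j) implies k(ℓ) ≠ k(j). -/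
/-! Every label `i` produced by `p` is fixed by `k`, so for such `i` the relation `ℓ ≤ i` holds
exactly when `k ℓ ≤ i`. Hence the set of labels above `ℓ`, and with it `k_p ℓ`, depends on `ℓ`
only through `k ℓ`. -/

theorem le_iff_map_le_of_map_eq_self {L : Type*} [Preorder L] {k : L → L}
    (hext : ∀ ℓ : L, ℓ ≤ k ℓ) (hmono : ∀ ℓ j : L, ℓ ≤ j → k ℓ ≤ k j)
    {i : L} (hi : k i = i) (ℓ : L) : ℓ ≤ i ↔ k ℓ ≤ i :=
  ⟨fun h => hi ▸ hmono ℓ i h, fun h => (hext ℓ).trans h⟩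

theorem setOf_mem_and_le_eq_of_map_eq {L : Type*} [Preorder L] {k : L → L}
    (hext : ∀ ℓ : L, ℓ ≤ k ℓ) (hmono : ∀ ℓ j : L, ℓ ≤ j → k ℓ ≤ k j)
    {S : Set L} (hS : ∀ i ∈ S, k i = i) {ℓ j : L} (h : k ℓ = k j) :
    {i | i ∈ S ∧ ℓ ≤ i} = {i | i ∈ S ∧ j ≤ i} := by
  ext i
  refine and_congr_right fun hi => ?_
  rw [le_iff_map_le_of_map_eq_self hext hmono (hS i hi) ℓ,
    le_iff_map_le_of_map_eq_self hext hmono (hS i hi) j, h]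

theorem kp_canonical_general {I O L : Type*} [CompleteLattice L]
    (p : Set (I × L) → Set (O × L)) (k : L → L)
    (hext : ∀ ℓ : L, ℓ ≤ k ℓ)
    (hmono : ∀ ℓ j : L, ℓ ≤ j → k ℓ ≤ k j)
    (hfix : ∀ (x : Set (I × L)) (j : L), (∃ a, (a, j) ∈ p x) → k j = j)
    (ℓ j : L)
    (hne : sInf {i | (∃ x, ∃ a, (a, i) ∈ p x) ∧ ℓ ≤ i} ≠
           sInf {i | (∃ x, ∃ a, (a, i) ∈ p x) ∧ j ≤ i}) :
    k ℓ ≠ k j := fun h =>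
  hne <| congrArg sInf <|
    setOf_mem_and_le_eq_of_map_eq (S := {i | ∃ x, ∃ a, (a, i) ∈ p x}) hext hmono
      (fun i ⟨x, hx⟩ => hfix x i hx) h

theorem kp_canonical {I O L : Type*} [CompleteLattice L]
    (p : Set (I × L) → Set (O × L)) (k : L → L)
    (hext : ∀ ℓ : L, ℓ ≤ k ℓ)
    (hmono : ∀ ℓ j : L, ℓ ≤ j → k ℓ ≤ k j)
    (hidem : ∀ ℓ : L, k (k ℓ) = k ℓ)
    (hfix : ∀ (x : Set (I × L)) (j : L), (∃ a, (a, j) ∈ p x) → k j = j)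
    (ℓ j : L)
    (hne : sInf {i | (∃ x, ∃ a, (a, i) ∈ p x) ∧ ℓ ≤ i} ≠
           sInf {i | (∃ x, ∃ a, (a, i) ∈ p x) ∧ j ≤ i}) :
    k ℓ ≠ k j :=
  kp_canonical_general p k hext hmono hfix ℓ j hne
end

section
/- Let F ⊣ G be a Galois connection between join-semilattices L and L' where F preserves finite joins. For finite L₀ ⊆ L define C_{F⊣G}(L₀) = G(C(F(L₀))) (image under G of the closure set of the image of L₀ under F). If L₀ and L₁ are finite subsets of L with L₀↓ℓ = L₁↓ℓ, then C_{F⊣G}(L₀)↓ℓ = C_{F⊣G}(L₁)↓ℓ. -/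
open scoped Classical

theorem galois_closure_equiv {L L' : Type*} [SemilatticeSup L] [OrderBot L]
    [SemilatticeSup L'] [OrderBot L'] [DecidableEq L] [DecidableEq L']
    (F : L → L') (G : L' → L)
    (hgc : ∀ (a : L) (b : L'), F a ≤ b ↔ a ≤ G b)
    (hFbot : F ⊥ = ⊥) (hFsup : ∀ a b : L, F (a ⊔ b) = F a ⊔ F b)
    (L₀ L₁ : Finset L) (ℓ : L)
    (heq : L₀.filter (fun s => s ≤ ℓ) = L₁.filter (fun s => s ≤ ℓ)) :
    (((L₀.image F).powerset.image (fun T => T.sup id)).image G).filter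
        (fun s => s ≤ ℓ) =
      (((L₁.image F).powerset.image (fun T => T.sup id)).image G).filter
        (fun s => s ≤ ℓ) := by
  have key : ∀ A B : Finset L, A.filter (fun s => s ≤ ℓ) = B.filter (fun s => s ≤ ℓ) →
      (((A.image F).powerset.image (fun T => T.sup id)).image G).filter (fun s => s ≤ ℓ) ⊆
      (((B.image F).powerset.image (fun T => T.sup id)).image G).filter (fun s => s ≤ ℓ) := by
    intro A B hAB x hx
    simp only [Finset.mem_filter, Finset.mem_image, Finset.mem_powerset] at hx ⊢
    obtain ⟨⟨c, ⟨T, hT, rfl⟩, rfl⟩, hxl⟩ := hx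
    refine ⟨⟨T.sup id, ⟨T, ?_, rfl⟩, rfl⟩, hxl⟩
    intro t ht
    obtain ⟨s, hs, rfl⟩ := Finset.mem_image.mp (hT ht)
    have hsl : s ≤ ℓ :=
      le_trans ((hgc s (T.sup id)).mp (Finset.le_sup (f := id) ht)) hxl
    have hsB : s ∈ B.filter (fun s => s ≤ ℓ) := hAB ▸ Finset.mem_filter.mpr ⟨hs, hsl⟩
    exact Finset.mem_image.mpr ⟨s, (Finset.mem_filter.mp hsB).1, rfl⟩
  exact le_antisymm (key L₀ L₁ heq) (key L₁ L₀ heq.symm)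
end

section
/- Let F ⊣ G be a Galois connection between join-semilattices L and L', with F preserving finite joins, and let L₀ be a finite subset of L. For any j in the image of G ∘ F (i.e., j = G(F(j))), the element ℓ = G(⨆ F(L₀↓j)) belongs to C_{F⊣G}(L₀) and satisfies j ∈ ℓ↑C_{F⊣G}(L₀), i.e., ℓ ≤ j and every ℓ' ∈ C_{F⊣G}(L₀) with ℓ' ≤ j satisfies ℓ' ≤ ℓ. -/
/-!
Every member of `C_{F⊣G}(L₀)` is `G (⨆ F(S))` for some `S ⊆ L₀`. If it lies below the closed
element `j`, then each `s ∈ S` satisfies `s ≤ G (F s) ≤ G (⨆ F(S)) ≤ j`, so `S ⊆ L₀↓j`, and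
monotonicity of `G ∘ ⨆ ∘ F` puts it below `ℓ = G (⨆ F(L₀↓j))`. Conversely `ℓ ≤ G (F j) = j`
because every `s ∈ L₀↓j` has `F s ≤ F j`.
-/

namespace GaloisConnection

variable {α β : Type*} [Preorder α] [SemilatticeSup β] [OrderBot β] {F : α → β} {G : β → α}

theorem u_finsetSup_le_u_l (gc : GaloisConnection F G) {S : Finset α} {j : α}
    (hS : ∀ s ∈ S, s ≤ j) : G (S.sup F) ≤ G (F j) :=
  gc.monotone_u (Finset.sup_le fun s hs => gc.monotone_l (hS s hs))

theorem le_of_mem_of_u_finsetSup_le (gc : GaloisConnection F G) {S : Finset α} {s j : α}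
    (hs : s ∈ S) (hSj : G (S.sup F) ≤ j) : s ≤ j :=
  (gc.le_u_l s).trans ((gc.monotone_u (Finset.le_sup hs)).trans hSj)

theorem u_finsetSup_le_u_finsetSup_filter (gc : GaloisConnection F G) {S L₀ : Finset α} {j : α}
    [DecidablePred (· ≤ j)] (hS : S ⊆ L₀) (hSj : G (S.sup F) ≤ j) :
    G (S.sup F) ≤ G ((L₀.filter (· ≤ j)).sup F) :=
  gc.monotone_u <| Finset.sup_mono fun _ hs =>
    Finset.mem_filter.2 ⟨hS hs, gc.le_of_mem_of_u_finsetSup_le hs hSj⟩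

end GaloisConnection

theorem Finset.mem_image_u_sup_powerset_image_iff {α β : Type*} [DecidableEq α] [DecidableEq β]
    [SemilatticeSup β] [OrderBot β] {F : α → β} {G : β → α} {L₀ : Finset α} {ℓ : α} :
    ℓ ∈ ((L₀.image F).powerset.image (fun T => T.sup id)).image G ↔
      ∃ S ⊆ L₀, G (S.sup F) = ℓ := by
  simp only [Finset.mem_image, Finset.mem_powerset, Finset.subset_image_iff]
  constructor
  · rintro ⟨_, ⟨_, ⟨S, hS, rfl⟩, rfl⟩, rfl⟩
    exact ⟨S, hS, by rw [Finset.sup_image]; rfl⟩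
  · rintro ⟨S, hS, rfl⟩
    exact ⟨_, ⟨_, ⟨S, hS, rfl⟩, rfl⟩, by rw [Finset.sup_image]; rfl⟩

open scoped Classical

theorem galois_closure_covers_general {L L' : Type*} [SemilatticeSup L] [OrderBot L]
    [SemilatticeSup L'] [OrderBot L'] [DecidableEq L] [DecidableEq L']
    (F : L → L') (G : L' → L)
    (hgc : ∀ (a : L) (b : L'), F a ≤ b ↔ a ≤ G b)
    (L₀ : Finset L) (j : L) (hj : G (F j) = j) :
    G (((L₀.filter (fun s => s ≤ j)).image F).sup id) ∈
        (((L₀.image F).powerset.image (fun T => T.sup id)).image G) ∧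
    G (((L₀.filter (fun s => s ≤ j)).image F).sup id) ≤ j ∧
    ∀ ℓ' ∈ (((L₀.image F).powerset.image (fun T => T.sup id)).image G),
      ℓ' ≤ j → ℓ' ≤ G (((L₀.filter (fun s => s ≤ j)).image F).sup id) := by
  have gc : GaloisConnection F G := hgc
  simp only [Finset.sup_image, Function.id_comp, Finset.mem_image_u_sup_powerset_image_iff]
  refine ⟨⟨_, Finset.filter_subset _ _, rfl⟩, ?_, ?_⟩
  · exact (gc.u_finsetSup_le_u_l fun s hs => (Finset.mem_filter.1 hs).2).trans hj.le
  · rintro _ ⟨S, hS, rfl⟩ hSj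
    exact gc.u_finsetSup_le_u_finsetSup_filter hS hSj

theorem galois_closure_covers {L L' : Type*} [SemilatticeSup L] [OrderBot L]
    [SemilatticeSup L'] [OrderBot L'] [DecidableEq L] [DecidableEq L']
    (F : L → L') (G : L' → L)
    (hgc : ∀ (a : L) (b : L'), F a ≤ b ↔ a ≤ G b)
    (hFbot : F ⊥ = ⊥) (hFsup : ∀ a b : L, F (a ⊔ b) = F a ⊔ F b)
    (L₀ : Finset L) (j : L) (hj : G (F j) = j) :
    G (((L₀.filter (fun s => s ≤ j)).image F).sup id) ∈
        (((L₀.image F).powerset.image (fun T => T.sup id)).image G) ∧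
    G (((L₀.filter (fun s => s ≤ j)).image F).sup id) ≤ j ∧
    ∀ ℓ' ∈ (((L₀.image F).powerset.image (fun T => T.sup id)).image G),
      ℓ' ≤ j → ℓ' ≤ G (((L₀.filter (fun s => s ≤ j)).image F).sup id) :=
  galois_closure_covers_general F G hgc L₀ j hj
end

section
/- In the vertical sum lattice L ⊕ᵥ L' (L' stacked on top of L), for any finite subset S, writing S = ({0}×L₀) ∪ ({1}×L₁) with L₀ ⊆ L and L₁ ⊆ L', the closure set satisfies C(S) ⊆ ({0}×C(L₀)) ∪ ({1}×C'(L₁)), where C' is taken with the join of the empty set in the top component interpreted appropriately; consequently |C(S)| ≤ |C(L₀)| + |C'(L₁)|. -/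
/-- The join of a subset of the vertical sum lattice `L ⊕ᵥ L'` determined by
its two components `A ⊆ L` (bottom part) and `B ⊆ L'` (top part): by the join
rules `(0,a) ⊔ (0,b) = (0, a ⊔ b)`, `(1,a) ⊔ (1,b) = (1, a ⊔ b)` and
`(0,a) ⊔ (1,b) = (1,b)`, it is `inr (⨆ B)` if `B` is nonempty and
`inl (⨆ A)` otherwise. -/
def vsumSup {L L' : Type*} [SemilatticeSup L] [OrderBot L]
    [SemilatticeSup L'] [OrderBot L'] (A : Finset L) (B : Finset L') : L ⊕ L' :=
  if B.Nonempty then Sum.inr (B.sup id) else Sum.inl (A.sup id)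

open Finset

theorem Finset.image_inl_union_image_inr {α β : Type*} [DecidableEq α] [DecidableEq β]
    (s : Finset α) (t : Finset β) :
    s.image Sum.inl ∪ t.image Sum.inr = s.disjSum t := by
  ext x
  simp [mem_disjSum]

section VerticalSum

variable {L L' : Type*} [SemilatticeSup L] [OrderBot L] [SemilatticeSup L'] [OrderBot L']
  [DecidableEq L] [DecidableEq L']

theorem vsumSup_mem_disjSum {A L₀ : Finset L} {B L₁ : Finset L'} (hA : A ⊆ L₀) (hB : B ⊆ L₁) :
    vsumSup A B ∈
      (L₀.powerset.image (fun T => T.sup id)).disjSum (L₁.powerset.image (fun T => T.sup id)) := by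
  unfold vsumSup
  split_ifs
  · exact inr_mem_disjSum.2 (mem_image_of_mem _ (mem_powerset.2 hB))
  · exact inl_mem_disjSum.2 (mem_image_of_mem _ (mem_powerset.2 hA))

theorem image_vsumSup_subset_disjSum (L₀ : Finset L) (L₁ : Finset L') :
    (L₀.powerset ×ˢ L₁.powerset).image (fun P => vsumSup P.1 P.2) ⊆
      (L₀.powerset.image (fun T => T.sup id)).disjSum (L₁.powerset.image (fun T => T.sup id)) := by
  rintro _ hx
  obtain ⟨⟨A, B⟩, hAB, rfl⟩ := mem_image.1 hx
  obtain ⟨hA, hB⟩ := mem_product.1 hAB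
  exact vsumSup_mem_disjSum (mem_powerset.1 hA) (mem_powerset.1 hB)

end VerticalSum

theorem vertical_sum_closure {L L' : Type*} [SemilatticeSup L] [OrderBot L]
    [SemilatticeSup L'] [OrderBot L'] [DecidableEq L] [DecidableEq L']
    (L₀ : Finset L) (L₁ : Finset L') :
    ((L₀.powerset ×ˢ L₁.powerset).image (fun P => vsumSup P.1 P.2)) ⊆
      ((L₀.powerset.image (fun T => T.sup id)).image Sum.inl ∪
        (L₁.powerset.image (fun T => T.sup id)).image Sum.inr) ∧
    ((L₀.powerset ×ˢ L₁.powerset).image (fun P => vsumSup P.1 P.2)).card ≤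
      (L₀.powerset.image (fun T => T.sup id)).card +
        (L₁.powerset.image (fun T => T.sup id)).card := by
  have hsub := image_vsumSup_subset_disjSum L₀ L₁
  rw [image_inl_union_image_inr]
  exact ⟨hsub, (card_le_card hsub).trans_eq (card_disjSum _ _)⟩
end
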